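/- arXiv:2102.01214 — 2 statements merged into one kernel-verified Lean document; each statement's English description precedes it below -/
import Mathlib

section
/- Let 1 > a₀ > a₁ > 0, 0 < b₁ < b₀ < c₀ < c₁, 1 > a₂ > 0, 0 < b₂ < c₂, and N > 0. Suppose K : Γ_{a₂,tb₂,tc₂} → ℂ satisfies sup_{w} N|K(w)|/|w| ≤ ε(t) where ε(t) → 0 as t → ∞ (uniformly over a family of functions). Then for all sufficiently large t: whenever z ∈ Γ_{a₀,tb₀,tc₀} and w ∈ Γ_{a₂,tb₂,tc₂}, the point z − N·K(w) lies in Γ_{a₁,tb₁,tc₁}. -/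
/-!
All three cones scale linearly in `t`, so the gaps between `Γ_{a₀,tb₀,tc₀}` and the wider cone
`Γ_{a₁,tb₁,tc₁}` have size `≍ t`, whereas the perturbation `N·K(w)` has size at most
`ε(t)·t c₂ = o(t)`.
-/

open Filter

/-- The truncated cone `Γ_{a,b,c} = {z : Im z ≥ max(a|z|, b), |z| ≤ c}`. -/
def truncCone (a b c : ℝ) : Set ℂ :=
  {z : ℂ | max (a * ‖z‖) b ≤ z.im ∧ ‖z‖ ≤ c}

theorem sub_mem_truncCone_of_norm_le {a₀ a₁ b₀ b₁ c₀ c₁ δ : ℝ} {z d : ℂ}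
    (ha₁ : a₁ ≤ a₀) (ha₁' : 0 ≤ a₁) (hz : z ∈ truncCone a₀ b₀ c₀) (hd : ‖d‖ ≤ δ)
    (hδc : δ ≤ c₁ - c₀) (hδb : δ ≤ b₀ - b₁) (hδa : (1 + a₁) * δ ≤ (a₀ - a₁) * b₀) :
    z - d ∈ truncCone a₁ b₁ c₁ := by
  obtain ⟨hz_im, hz_norm⟩ := hz
  have hz_a : a₀ * ‖z‖ ≤ z.im := (le_max_left _ _).trans hz_im
  have hz_b : b₀ ≤ z.im := (le_max_right _ _).trans hz_im
  have hb₀_norm : b₀ ≤ ‖z‖ := hz_b.trans (Complex.im_le_norm z)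
  have hd_im : d.im ≤ ‖d‖ := (le_abs_self _).trans (Complex.abs_im_le_norm d)
  have h_norm : ‖z - d‖ ≤ ‖z‖ + δ := (norm_sub_le z d).trans (by linarith)
  rw [truncCone, Set.mem_ofPred_eq, Complex.sub_im]
  refine ⟨max_le ?_ (by linarith), by linarith⟩
  -- the slack `(a₀ - a₁)‖z‖ ≥ (a₀ - a₁) b₀` in the aperture absorbs the loss `(1 + a₁) δ`
  nlinarith [mul_le_mul_of_nonneg_left h_norm ha₁',
    mul_le_mul_of_nonneg_left hb₀_norm (sub_nonneg.2 ha₁)]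

theorem exists_truncCone_margin {a₀ a₁ b₀ b₁ c₀ c₁ : ℝ} (ha₁ : a₁ < a₀) (ha₁' : -1 < a₁)
    (hb₀ : 0 < b₀) (hb₁ : b₁ < b₀) (hc₁ : c₀ < c₁) :
    ∃ δ > 0, δ ≤ c₁ - c₀ ∧ δ ≤ b₀ - b₁ ∧ (1 + a₁) * δ ≤ (a₀ - a₁) * b₀ := by
  have h_one_add : 0 < 1 + a₁ := by linarith
  refine ⟨min (c₁ - c₀) (min (b₀ - b₁) ((a₀ - a₁) * b₀ / (1 + a₁))), ?_, min_le_left _ _,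
    (min_le_right _ _).trans (min_le_left _ _), ?_⟩
  · exact lt_min (by linarith)
      (lt_min (by linarith) (div_pos (mul_pos (by linarith) hb₀) h_one_add))
  · rw [← le_div_iff₀' h_one_add]
    exact (min_le_right _ _).trans (min_le_right _ _)

theorem stmt6_general {ι : Type*} (N a₀ a₁ a₂ b₀ b₁ b₂ c₀ c₁ c₂ : ℝ)
    (ha₁ : a₁ < a₀) (ha₁' : 0 < a₁)
    (hb₁ : 0 < b₁) (hb₀ : b₁ < b₀) (hc₁ : c₀ < c₁)
    (hN : 0 < N)
    (K : ι → ℂ → ℂ) (ε : ℝ → ℝ) (hε : Tendsto ε atTop (nhds 0))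
    (hK : ∀ t : ℝ, ∀ i : ι, ∀ w ∈ truncCone a₂ (t * b₂) (t * c₂),
      N * ‖K i w‖ ≤ ε t * ‖w‖) :
    ∃ T : ℝ, ∀ t ≥ T, ∀ i : ι,
      ∀ z ∈ truncCone a₀ (t * b₀) (t * c₀), ∀ w ∈ truncCone a₂ (t * b₂) (t * c₂),
        z - (N : ℂ) * K i w ∈ truncCone a₁ (t * b₁) (t * c₁) := by
  obtain ⟨δ, hδ, hδc, hδb, hδa⟩ :=
    exists_truncCone_margin ha₁ (by linarith) (hb₁.trans hb₀) hb₀ hc₁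
  have hε_c₂ : Tendsto (fun t ↦ ε t * c₂) atTop (nhds 0) := by
    simpa using hε.mul_const c₂
  obtain ⟨T, hT⟩ :=
    eventually_atTop.1 ((eventually_ge_atTop 0).and (hε_c₂.eventually_lt_const hδ))
  refine ⟨T, fun t ht i z hz w hw ↦ ?_⟩
  obtain ⟨ht₀, hεt⟩ := hT t ht
  refine sub_mem_truncCone_of_norm_le ha₁.le ha₁'.le hz (δ := t * δ) ?_ ?_ ?_ ?_
  · have hw_norm : ‖w‖ ≤ t * c₂ := hw.2
    rw [norm_mul, Complex.norm_real, Real.norm_of_nonneg hN.le]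
    refine (hK t i w hw).trans ?_
    rcases le_total (ε t) 0 with hneg | hpos
    · nlinarith [norm_nonneg w]
    · nlinarith [mul_le_mul_of_nonneg_left hw_norm hpos]
  · rw [← mul_sub]; exact mul_le_mul_of_nonneg_left hδc ht₀
  · rw [← mul_sub]; exact mul_le_mul_of_nonneg_left hδb ht₀
  · nlinarith [mul_le_mul_of_nonneg_left hδa ht₀]

/-- If a family of functions `K i` satisfies `N·|K i(w)| ≤ ε(t)·|w|` on
`Γ_{a₂,tb₂,tc₂}` with `ε(t) → 0`, then for all sufficiently large `t`:
`z ∈ Γ_{a₀,tb₀,tc₀}` and `w ∈ Γ_{a₂,tb₂,tc₂}` imply `z − N·K i(w) ∈ Γ_{a₁,tb₁,tc₁}`. -/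
theorem stmt6 {ι : Type*} (N a₀ a₁ a₂ b₀ b₁ b₂ c₀ c₁ c₂ : ℝ)
    (ha₀ : a₀ < 1) (ha₁ : a₁ < a₀) (ha₁' : 0 < a₁)
    (hb₁ : 0 < b₁) (hb₀ : b₁ < b₀) (hc₀ : b₀ < c₀) (hc₁ : c₀ < c₁)
    (ha₂ : a₂ < 1) (ha₂' : 0 < a₂) (hb₂ : 0 < b₂) (hc₂ : b₂ < c₂)
    (hN : 0 < N)
    (K : ι → ℂ → ℂ) (ε : ℝ → ℝ) (hε : Tendsto ε atTop (nhds 0))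
    (hK : ∀ t : ℝ, ∀ i : ι, ∀ w ∈ truncCone a₂ (t * b₂) (t * c₂),
      N * ‖K i w‖ ≤ ε t * ‖w‖) :
    ∃ T : ℝ, ∀ t ≥ T, ∀ i : ι,
      ∀ z ∈ truncCone a₀ (t * b₀) (t * c₀), ∀ w ∈ truncCone a₂ (t * b₂) (t * c₂),
        z - (N : ℂ) * K i w ∈ truncCone a₁ (t * b₁) (t * c₁) :=
  stmt6_general N a₀ a₁ a₂ b₀ b₁ b₂ c₀ c₁ c₂ ha₁ ha₁' hb₁ hb₀ hc₁ hN K ε hε hK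
end

section
/- Let 𝒯 ∈ Tree(k), 𝒯_j ∈ Tree(n_j) for j ∈ [k], N = n₁+…+n_k, ι_j : [n_j] → [N] the shifted inclusions, and fix j ∈ [k], i ∈ [n_j]. Then the branch of the operad composition satisfies br_{ι_j(i)}(𝒯(𝒯₁,…,𝒯_k)) = { s̃ · (ι_j)_*(s') : s̃ ∈ br_j(𝒯)(𝒯₁,…,𝒯_k), s' ∈ br_i(𝒯_j) }, and moreover the decomposition of each element into such a pair (s̃, s') is unique. -/
/-- A rooted subtree of the tree of alternating strings on the alphabet `Fin N`. -/
def IsTree {N : ℕ} (T : Set (List (Fin N))) : Prop :=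
  [] ∈ T ∧ (∀ s ∈ T, s.Chain' (· ≠ ·)) ∧
    ∀ (j : Fin N) (s : List (Fin N)), j :: s ∈ T → s ∈ T

/-- The branch `br_j(𝒯) = {s : sj ∈ 𝒯}` of a rooted tree. -/
def brS {M : ℕ} (j : Fin M) (T : Set (List (Fin M))) : Set (List (Fin M)) :=
  {s | s ++ [j] ∈ T}

/-- The shifted inclusion `ι_j : [n_j] → [n₁ + ⋯ + n_k]`. -/
def iotaS {K : ℕ} (n : Fin K → ℕ) (j : Fin K) (i : Fin (n j)) : Fin (∑ j', n j') :=
  ⟨(∑ j' ∈ Finset.univ.filter (fun j' => j' < j), n j') + i.val, by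
    have hi := i.isLt
    have hj : j ∉ Finset.univ.filter (fun j' => j' < j) := by simp
    have h2 : n j + ∑ j' ∈ Finset.univ.filter (fun j' => j' < j), n j'
        = ∑ j' ∈ insert j (Finset.univ.filter (fun j' => j' < j)), n j' :=
      (Finset.sum_insert hj).symm
    have h3 : ∑ j' ∈ insert j (Finset.univ.filter (fun j' => j' < j)), n j' ≤ ∑ j', n j' :=
      Finset.sum_le_sum_of_subset (Finset.subset_univ _)
    omega⟩

/-- The operad composition `𝒯(𝒯₁,…,𝒯_k)`: all strings
`(ι_{i₁})_*(s₁) ⋯ (ι_{i_ℓ})_*(s_ℓ)` with `i₁…i_ℓ ∈ 𝒯` and `s_t ∈ 𝒯_{i_t}` nonempty. -/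
def compS {K : ℕ} (n : Fin K → ℕ) (𝒯 : Set (List (Fin K)))
    (Ts : (j : Fin K) → Set (List (Fin (n j)))) : Set (List (Fin (∑ j', n j'))) :=
  {w | ∃ p : List ((j : Fin K) × List (Fin (n j))),
    p.map Sigma.fst ∈ 𝒯 ∧ (∀ q ∈ p, q.2 ∈ Ts q.1 ∧ q.2 ≠ []) ∧
    w = (p.map (fun q => q.2.map (iotaS n q.1))).flatten}

/-! The letter `ι_j(i)` that ends a composed word ends its last block, so that block is a word
`s' i` of `𝒯_j` sitting at a label `j` of `𝒯`; stripping it leaves a composed word over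
`br_j(𝒯)`. Such a word is empty or ends in a block labelled `m` with `m j` a factor of a word of
`𝒯`, so `m ≠ j` since `𝒯` is alternating: its last letter is outside the image of `ι_j`. Hence
`s̃` is recovered as the word with its maximal suffix in the image of `ι_j` removed, and `s'`
by injectivity of `ι_j`. -/

namespace List

variable {α : Type*} {P : α → Prop}

theorem eq_nil_of_append_of_getLast? {t c : List α} (hc : ∀ x ∈ c, P x)
    (hlast : ∀ x ∈ (t ++ c).getLast?, ¬ P x) : c = [] := by
  rcases eq_nil_or_concat' c with rfl | ⟨c', x, rfl⟩
  · rfl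
  · exact absurd (hc x (by simp)) (hlast x (by simp))

theorem append_inj_of_getLast? {t₁ t₂ a₁ a₂ : List α} (h : t₁ ++ a₁ = t₂ ++ a₂)
    (ha₁ : ∀ x ∈ a₁, P x) (ha₂ : ∀ x ∈ a₂, P x)
    (ht₁ : ∀ x ∈ t₁.getLast?, ¬ P x) (ht₂ : ∀ x ∈ t₂.getLast?, ¬ P x) :
    t₁ = t₂ ∧ a₁ = a₂ := by
  rcases append_eq_append_iff.mp h with ⟨c, rfl, rfl⟩ | ⟨c, rfl, rfl⟩
  · obtain rfl := eq_nil_of_append_of_getLast? (fun x hx => ha₁ x (mem_append_left _ hx)) ht₂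
    simp
  · obtain rfl := eq_nil_of_append_of_getLast? (fun x hx => ha₂ x (mem_append_left _ hx)) ht₁
    simp

end List

section Composition

variable {K : ℕ} (n : Fin K → ℕ)

theorem sum_filter_lt_add_le_of_lt {j j' : Fin K} (h : j < j') :
    (∑ x ∈ Finset.univ.filter (· < j), n x) + n j ≤ ∑ x ∈ Finset.univ.filter (· < j'), n x := by
  have hsub : insert j (Finset.univ.filter (· < j)) ⊆ Finset.univ.filter (· < j') := by
    intro x hx
    simp only [Finset.mem_insert, Finset.mem_filter, Finset.mem_univ, true_and] at hx ⊢
    rcases hx with rfl | hx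
    · exact h
    · exact hx.trans h
  have := Finset.sum_le_sum_of_subset (f := n) hsub
  rwa [Finset.sum_insert (by simp), add_comm] at this

theorem eq_of_iotaS_eq {j j' : Fin K} {i : Fin (n j)} {i' : Fin (n j')}
    (h : iotaS n j i = iotaS n j' i') : j = j' := by
  have hv := congrArg Fin.val h
  simp only [iotaS] at hv
  have := i.isLt
  have := i'.isLt
  rcases lt_trichotomy j j' with hlt | heq | hlt
  · have := sum_filter_lt_add_le_of_lt n hlt; omega
  · exact heq
  · have := sum_filter_lt_add_le_of_lt n hlt; omega

theorem iotaS_injective (j : Fin K) : Function.Injective (iotaS n j) := fun i i' h => by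
  have hv := congrArg Fin.val h
  simp only [iotaS] at hv
  exact Fin.ext (by omega)

theorem compS_empty (Ts : (j : Fin K) → Set (List (Fin (n j)))) : compS n ∅ Ts = ∅ :=
  Set.eq_empty_of_forall_notMem fun _ ⟨_, h, _⟩ => h

theorem brS_brS_self_eq_empty {M : ℕ} {T : Set (List (Fin M))}
    (hT : ∀ s ∈ T, s.IsChain (· ≠ ·)) (j : Fin M) : brS j (brS j T) = ∅ :=
  Set.eq_empty_of_forall_notMem fun s hs => by
    have := hT _ hs
    simp [List.isChain_append] at this

theorem append_iotaS_mem_compS_iff (𝒯 : Set (List (Fin K)))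
    (Ts : (j : Fin K) → Set (List (Fin (n j)))) (j : Fin K) (i : Fin (n j))
    (w : List (Fin (∑ j', n j'))) :
    w ++ [iotaS n j i] ∈ compS n 𝒯 Ts ↔
      ∃ t ∈ compS n (brS j 𝒯) Ts, ∃ s ∈ brS i (Ts j), w = t ++ s.map (iotaS n j) := by
  constructor
  · rintro ⟨p, hp𝒯, hpTs, hw⟩
    rcases List.eq_nil_or_concat' p with rfl | ⟨p, ⟨m, s⟩, rfl⟩
    · simp at hw
    rcases List.eq_nil_or_concat' s with rfl | ⟨s, a, rfl⟩
    · exact absurd rfl (hpTs ⟨m, []⟩ (by simp)).2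
    simp only [List.map_append, List.map_cons, List.map_nil, List.flatten_append,
      List.flatten_cons, List.flatten_nil, List.append_nil, ← List.append_assoc] at hw
    obtain ⟨rfl, hlast⟩ := List.append_inj' hw rfl
    have hia := List.singleton_inj.mp hlast
    obtain rfl := eq_of_iotaS_eq n hia
    obtain rfl := iotaS_injective n j hia
    refine ⟨_, ⟨p, by simpa [brS] using hp𝒯, fun q hq => hpTs q (List.mem_append_left _ hq),
      rfl⟩, s, (hpTs ⟨j, s ++ [i]⟩ (by simp)).1, rfl⟩
  · rintro ⟨t, ⟨p, hp𝒯, hpTs, rfl⟩, s, hs, rfl⟩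
    refine ⟨p ++ [⟨j, s ++ [i]⟩], by simpa [brS] using hp𝒯, ?_, by simp⟩
    intro q hq
    rcases List.mem_append.mp hq with hq | hq
    · exact hpTs q hq
    · obtain rfl := List.mem_singleton.mp hq
      exact ⟨hs, by simp⟩

theorem getLast?_notMem_range_iotaS_of_mem_compS {𝒯 : Set (List (Fin K))}
    (h𝒯 : ∀ s ∈ 𝒯, s.IsChain (· ≠ ·)) (Ts : (j : Fin K) → Set (List (Fin (n j))))
    {j : Fin K} {t : List (Fin (∑ j', n j'))} (ht : t ∈ compS n (brS j 𝒯) Ts) :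
    ∀ x ∈ t.getLast?, x ∉ Set.range (iotaS n j) := by
  rintro _ hx ⟨i, rfl⟩
  -- a last letter from block `j` would put a word ending in `j j` into the alternating tree `𝒯`
  rw [← List.dropLast_append_getLast? _ hx, append_iotaS_mem_compS_iff] at ht
  obtain ⟨_, ht', -⟩ := ht
  rw [brS_brS_self_eq_empty h𝒯, compS_empty] at ht'
  exact ht'

end Composition

theorem stmt19_general {K : ℕ} (n : Fin K → ℕ) (𝒯 : Set (List (Fin K)))
    (Ts : (j : Fin K) → Set (List (Fin (n j))))
    (h𝒯 : IsTree 𝒯)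
    (j : Fin K) (i : Fin (n j)) :
    brS (iotaS n j i) (compS n 𝒯 Ts) =
      {w | ∃ t ∈ compS n (brS j 𝒯) Ts, ∃ s' ∈ brS i (Ts j),
        w = t ++ s'.map (iotaS n j)} ∧
    ∀ t₁ ∈ compS n (brS j 𝒯) Ts, ∀ s₁ ∈ brS i (Ts j),
      ∀ t₂ ∈ compS n (brS j 𝒯) Ts, ∀ s₂ ∈ brS i (Ts j),
        t₁ ++ s₁.map (iotaS n j) = t₂ ++ s₂.map (iotaS n j) → t₁ = t₂ ∧ s₁ = s₂ := by
  refine ⟨Set.ext fun w => append_iotaS_mem_compS_iff n 𝒯 Ts j i w, ?_⟩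
  intro t₁ ht₁ s₁ _ t₂ ht₂ s₂ _ h
  have hrange (s : List (Fin (n j))) : ∀ x ∈ s.map (iotaS n j), x ∈ Set.range (iotaS n j) :=
    fun _ hx => (List.mem_map.mp hx).imp fun _ hy => hy.2
  obtain ⟨rfl, hs⟩ := List.append_inj_of_getLast? h (hrange s₁) (hrange s₂)
    (getLast?_notMem_range_iotaS_of_mem_compS n h𝒯.2.1 Ts ht₁)
    (getLast?_notMem_range_iotaS_of_mem_compS n h𝒯.2.1 Ts ht₂)
  exact ⟨rfl, List.map_injective_iff.mpr (iotaS_injective n j) hs⟩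

theorem stmt19 {K : ℕ} (n : Fin K → ℕ) (𝒯 : Set (List (Fin K)))
    (Ts : (j : Fin K) → Set (List (Fin (n j))))
    (h𝒯 : IsTree 𝒯) (hTs : ∀ j, IsTree (Ts j))
    (j : Fin K) (i : Fin (n j)) :
    brS (iotaS n j i) (compS n 𝒯 Ts) =
      {w | ∃ t ∈ compS n (brS j 𝒯) Ts, ∃ s' ∈ brS i (Ts j),
        w = t ++ s'.map (iotaS n j)} ∧
    ∀ t₁ ∈ compS n (brS j 𝒯) Ts, ∀ s₁ ∈ brS i (Ts j),
      ∀ t₂ ∈ compS n (brS j 𝒯) Ts, ∀ s₂ ∈ brS i (Ts j),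
        t₁ ++ s₁.map (iotaS n j) = t₂ ++ s₂.map (iotaS n j) → t₁ = t₂ ∧ s₁ = s₂ :=
  stmt19_general n 𝒯 Ts h𝒯 j i
end
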